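/- With the wave-vector setup in the context, define for t > 0 and x ∈ ℝ³: u₁₂(t,x) = (r^{−2β}/2) Σ_{i=1}^r Σ_{j=1}^r |k_i|^α |k_j|^α ( ∫_0^t e^{−(|k_i|^{2α}+|k_j'|^{2α})τ} e^{−|k_j'+k_i|^{2α}(t−τ)} dτ ) sin((k_j'+k_i)·x) v'. Then there exists a constant C depending only on α (independent of r, K, t, β) such that sup_{x∈ℝ³} |u₁₂(t,x)| ≤ C r^{−2β} for all t > 0. -/

import Mathlib

/-!
Write `w_i = |k_i|^α √t` and `g(w) = w e^{-w²/2}`. Both frequencies in the Duhamel integral of the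
`(i, j)` mode dominate `|k_i|^{2α}` and `|k_j|^{2α}`, so the integral is at most
`t e^{-(|k_i|^{2α} + |k_j|^{2α}) t / 2}` and the mode amplitude is at most `g(w_i) g(w_j)`.
Since `w_{i+1} = 2^α w_i ≥ 2 w_i` and `g(w) ≤ min(w, 2/w)`, the sum `∑ g(w_i)` is at most `8`
whatever `r`, `K` and `t` are, hence `sup |u₁₂| ≤ r^{-2β}/2 · 8² = 32 r^{-2β}`.
-/

open Real Finset

/-- The slack `- v 0` in the first bound is what absorbs the new term `v 0` when the induction
shifts the sequence. -/
lemma sum_range_min_inv_le_of_two_mul_le_aux (n : ℕ) :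
    ∀ v : ℕ → ℝ, 0 < v 0 → (∀ i, 2 * v i ≤ v (i + 1)) →
      (v 0 ≤ 1 → ∑ i ∈ range n, min (v i) (v i)⁻¹ ≤ 4 - v 0) ∧
      (1 ≤ v 0 → ∑ i ∈ range n, min (v i) (v i)⁻¹ ≤ 2 / v 0) := by
  induction n with
  | zero =>
    intro v hv0 _
    simp only [range_zero, sum_empty]
    exact ⟨fun h => by linarith, fun _ => by positivity⟩
  | succ n ih =>
    intro v hv0 hv
    have hv1 : 2 * v 0 ≤ v 1 := hv 0
    obtain ⟨ih_le, ih_ge⟩ := ih (fun i => v (i + 1)) (by linarith) (fun i => hv (i + 1))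
    simp only [zero_add] at ih_le ih_ge
    rw [sum_range_succ']
    constructor
    · intro hle
      rw [min_eq_left (hle.trans ((one_le_inv₀ hv0).2 hle))]
      rcases le_total (v 1) 1 with h | h
      · linarith [ih_le h]
      · have : 2 / v 1 ≤ 2 := by rw [div_le_iff₀ (by linarith)]; linarith
        linarith [ih_ge h]
    · intro hge
      rw [min_eq_right (((inv_le_one₀ hv0).2 hge).trans hge)]
      have : 2 / v 1 ≤ (v 0)⁻¹ := by
        rw [← one_div, div_le_div_iff₀ (by linarith) hv0]; linarith
      linarith [ih_ge (by linarith), div_eq_mul_inv 2 (v 0)]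

/-- The terms `min (v i) (v i)⁻¹` grow geometrically while `v i ≤ 1` and decay geometrically
afterwards, so their sum is bounded independently of the number of terms. -/
lemma sum_range_min_inv_le_of_two_mul_le (v : ℕ → ℝ) (hv0 : 0 < v 0)
    (hv : ∀ i, 2 * v i ≤ v (i + 1)) (n : ℕ) :
    ∑ i ∈ range n, min (v i) (v i)⁻¹ ≤ 4 := by
  obtain ⟨h_le, h_ge⟩ := sum_range_min_inv_le_of_two_mul_le_aux n v hv0 hv
  rcases le_total (v 0) 1 with h | h
  · linarith [h_le h]
  · have : 2 / v 0 ≤ 2 := by rw [div_le_iff₀ hv0]; linarith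
    linarith [h_ge h]

lemma mul_exp_neg_sq_div_two_le {w : ℝ} (hw : 0 < w) :
    w * exp (-(w ^ 2 / 2)) ≤ 2 * min (w / 2) (w / 2)⁻¹ := by
  have hexp : 0 < exp (-(w ^ 2 / 2)) := exp_pos _
  have hexp_mul : exp (w ^ 2 / 2) * exp (-(w ^ 2 / 2)) = 1 := by rw [← exp_add]; simp
  have h_small : w * exp (-(w ^ 2 / 2)) ≤ w := by
    have : exp (-(w ^ 2 / 2)) ≤ 1 := exp_le_one_iff.2 (by nlinarith)
    nlinarith
  have h_large : w * exp (-(w ^ 2 / 2)) ≤ 4 / w := by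
    rw [le_div_iff₀ hw]
    nlinarith [add_one_le_exp (w ^ 2 / 2)]
  rw [mul_min_of_nonneg _ _ (by norm_num : (0:ℝ) ≤ 2)]
  refine le_min (by linarith) ?_
  calc w * exp (-(w ^ 2 / 2)) ≤ 4 / w := h_large
    _ = 2 * (w / 2)⁻¹ := by field_simp; norm_num

lemma sum_range_mul_exp_neg_sq_div_two_le (v : ℕ → ℝ) (hv0 : 0 < v 0)
    (hv : ∀ i, 2 * v i ≤ v (i + 1)) (n : ℕ) :
    ∑ i ∈ range n, v i * exp (-(v i ^ 2 / 2)) ≤ 8 := by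
  have hpos : ∀ i, 0 < v i := by
    intro i
    induction i with
    | zero => exact hv0
    | succ i ih => linarith [hv i]
  calc ∑ i ∈ range n, v i * exp (-(v i ^ 2 / 2))
      ≤ ∑ i ∈ range n, 2 * min (v i / 2) (v i / 2)⁻¹ :=
        sum_le_sum fun i _ => mul_exp_neg_sq_div_two_le (hpos i)
    _ = 2 * ∑ i ∈ range n, min (v i / 2) (v i / 2)⁻¹ := (mul_sum _ _ _).symm
    _ ≤ 2 * 4 := by
        gcongr
        exact sum_range_min_inv_le_of_two_mul_le (fun i => v i / 2) (by linarith)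
          (fun i => by linarith [hv i]) n
    _ = 8 := by norm_num

lemma abs_integral_exp_mul_exp_le {a b M t : ℝ} (ht : 0 ≤ t) (ha : M ≤ a) (hb : M ≤ b) :
    |∫ τ in (0:ℝ)..t, exp (-a * τ) * exp (-b * (t - τ))| ≤ t * exp (-(M * t)) := by
  have h := intervalIntegral.norm_integral_le_of_norm_le_const (a := 0) (b := t)
    (C := exp (-(M * t))) (f := fun τ => exp (-a * τ) * exp (-b * (t - τ))) (by
      intro τ hτ
      rw [Set.uIoc_of_le ht] at hτ
      rw [norm_of_nonneg (by positivity), ← exp_add, exp_le_exp]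
      nlinarith [hτ.1, hτ.2])
  rw [sub_zero, abs_of_nonneg ht] at h
  linarith [h, Real.norm_eq_abs (∫ τ in (0:ℝ)..t, exp (-a * τ) * exp (-b * (t - τ)))]

lemma mul_abs_integral_exp_mul_exp_le {x y a b t : ℝ} (hx : 0 ≤ x) (hy : 0 ≤ y) (ht : 0 ≤ t)
    (ha : (x ^ 2 + y ^ 2) / 2 ≤ a) (hb : (x ^ 2 + y ^ 2) / 2 ≤ b) :
    x * y * |∫ τ in (0:ℝ)..t, exp (-a * τ) * exp (-b * (t - τ))| ≤
      x * √t * exp (-((x * √t) ^ 2 / 2)) * (y * √t * exp (-((y * √t) ^ 2 / 2))) := by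
  calc x * y * |∫ τ in (0:ℝ)..t, exp (-a * τ) * exp (-b * (t - τ))|
      ≤ x * y * (t * exp (-((x ^ 2 + y ^ 2) / 2 * t))) := by
        gcongr
        exact abs_integral_exp_mul_exp_le ht ha hb
    _ = x * √t * exp (-((x * √t) ^ 2 / 2)) * (y * √t * exp (-((y * √t) ^ 2 / 2))) := by
        have hexp : exp (-((x ^ 2 + y ^ 2) / 2 * t)) =
            exp (-((x * √t) ^ 2 / 2)) * exp (-((y * √t) ^ 2 / 2)) := by
          rw [← exp_add, mul_pow, mul_pow, sq_sqrt ht]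
          ring_nf
        rw [hexp]
        linear_combination (x * y * exp (-((x * √t) ^ 2 / 2)) * exp (-((y * √t) ^ 2 / 2))) *
          (mul_self_sqrt ht).symm

lemma rpow_two_mul {z : ℝ} (hz : 0 ≤ z) (α : ℝ) : z ^ (2 * α) = (z ^ 2) ^ α := by
  rw [rpow_mul hz, rpow_two]

lemma sq_rpow_le_rpow {p s α : ℝ} (hp : 0 ≤ p) (hα : 0 ≤ α) (h : p ^ 2 ≤ s) :
    (p ^ α) ^ 2 ≤ s ^ α := by
  rw [← rpow_natCast, ← rpow_mul hp, mul_comm, rpow_mul hp]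
  norm_cast
  exact rpow_le_rpow (by positivity) h hα

/-- The `(i, j)` mode of `u₁₂`, with `p = |k_i|` and `q = |k_j|`. -/
lemma abs_mode_le {α p q t : ℝ} (hα : 0 ≤ α) (hp : 0 ≤ p) (hq : 0 ≤ q) (ht : 0 ≤ t) (z : ℝ) :
    |p ^ α * q ^ α *
        (∫ τ in (0:ℝ)..t, exp (-(p ^ (2 * α) + (q ^ 2 + 1) ^ α) * τ) *
          exp (-(√((q + p) ^ 2 + 1)) ^ (2 * α) * (t - τ))) * sin z| ≤
      p ^ α * √t * exp (-((p ^ α * √t) ^ 2 / 2)) *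
        (q ^ α * √t * exp (-((q ^ α * √t) ^ 2 / 2))) := by
  have hwave : ∀ {s}, 0 ≤ s → s ^ 2 ≤ (q + p) ^ 2 + 1 →
      (s ^ α) ^ 2 ≤ √((q + p) ^ 2 + 1) ^ (2 * α) := fun hs h => by
    rw [rpow_two_mul (sqrt_nonneg _), sq_sqrt (by positivity)]
    exact sq_rpow_le_rpow hs hα h
  have hpp : (p ^ α) ^ 2 ≤ p ^ (2 * α) := by
    rw [rpow_two_mul hp]; exact sq_rpow_le_rpow hp hα le_rfl
  have hqq : (q ^ α) ^ 2 ≤ (q ^ 2 + 1) ^ α := sq_rpow_le_rpow hq hα (by linarith)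
  have hpw := hwave hp (by nlinarith)
  have hqw := hwave hq (by nlinarith)
  rw [abs_mul, abs_mul, abs_mul, abs_of_nonneg (by positivity : 0 ≤ p ^ α),
    abs_of_nonneg (by positivity : 0 ≤ q ^ α)]
  calc _ ≤ p ^ α * q ^ α *
        |∫ τ in (0:ℝ)..t, exp (-(p ^ (2 * α) + (q ^ 2 + 1) ^ α) * τ) *
          exp (-(√((q + p) ^ 2 + 1)) ^ (2 * α) * (t - τ))| * 1 := by
        gcongr; exact abs_sin_le_one z
    _ ≤ _ := by
        rw [mul_one]
        exact mul_abs_integral_exp_mul_exp_le (by positivity) (by positivity) ht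
          (by nlinarith [sq_nonneg (p ^ α), sq_nonneg (q ^ α)]) (by linarith)

lemma sqrt_sum_sq_smul_single_one (s : ℝ) :
    √(∑ p, ((s • ![0, 1, 0] : Fin 3 → ℝ) p) ^ 2) = |s| := by
  simp [Fin.sum_univ_three, sqrt_sq_eq_abs]

/-- The sum-frequency part `u₁₂` of the second Picard iterate satisfies the uniform
bound `sup_x |u₁₂(t,x)| ≤ C r^{-2β}` for all `t > 0`, with `C` depending only on `α`. -/
theorem stmt_10 (α : ℝ) (hα : 1 ≤ α) :
    ∃ C : ℝ, 0 < C ∧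
      ∀ r : ℕ, 1 ≤ r → ∀ K β : ℝ, 1 ≤ K → 0 < β →
      ∀ kmag : ℕ → ℝ, (∀ i, kmag i = (2:ℝ) ^ (i - 1) * K) →
      ∀ k k' : ℕ → Fin 3 → ℝ,
        (∀ i, k i = ![kmag i, 0, 0]) → (∀ i, k' i = ![kmag i, 0, 1]) →
      ∀ u₁₂ : ℝ → (Fin 3 → ℝ) → Fin 3 → ℝ,
        (∀ t x, u₁₂ t x = ((r:ℝ) ^ (-(2 * β)) / 2) •
          ∑ i ∈ Finset.Icc 1 r, ∑ j ∈ Finset.Icc 1 r,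
            ((kmag i ^ α * kmag j ^ α *
                ∫ τ in (0:ℝ)..t,
                  Real.exp (-(kmag i ^ (2 * α) + (kmag j ^ 2 + 1) ^ α) * τ) *
                    Real.exp (-(Real.sqrt (∑ m, (k' j m + k i m) ^ 2)) ^ (2 * α) *
                      (t - τ))) *
              Real.sin (∑ m, (k' j m + k i m) * x m)) • (![0, 1, 0] : Fin 3 → ℝ)) →
        ∀ t : ℝ, 0 < t → ∀ x : Fin 3 → ℝ,
          Real.sqrt (∑ p, u₁₂ t x p ^ 2) ≤ C * (r:ℝ) ^ (-(2 * β)) := by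
  refine ⟨32, by norm_num, ?_⟩
  intro r _ K β hK _ kmag hkmag k k' hk hk' u₁₂ hu t ht x
  have hkmag_pos : ∀ i, 0 < kmag i := fun i => by rw [hkmag]; positivity
  have hwave : ∀ i j, ∑ m, (k' j m + k i m) ^ 2 = (kmag j + kmag i) ^ 2 + 1 := by
    intro i j; simp [hk, hk', Fin.sum_univ_three]
  set g : ℕ → ℝ := fun i => kmag i ^ α * √t * exp (-((kmag i ^ α * √t) ^ 2 / 2))
  have hg : ∑ i ∈ Icc 1 r, g i ≤ 8 := by
    rw [← Ico_add_one_right_eq_Icc, sum_Ico_eq_sum_range, Nat.add_sub_cancel]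
    refine sum_range_mul_exp_neg_sq_div_two_le (fun i => kmag (1 + i) ^ α * √t)
      (by have := hkmag_pos 1; positivity) (fun i => ?_) r
    have hdouble : kmag (1 + (i + 1)) = 2 * kmag (1 + i) := by
      rw [hkmag, hkmag, show 1 + (i + 1) - 1 = i + 1 by omega, show 1 + i - 1 = i by omega]
      ring
    have h2α : 2 ≤ (2:ℝ) ^ α := self_le_rpow_of_one_le one_le_two hα
    have hpos : 0 ≤ kmag (1 + i) ^ α * √t := by have := hkmag_pos (1 + i); positivity
    rw [hdouble, mul_rpow zero_le_two (hkmag_pos _).le]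
    linarith [mul_le_mul_of_nonneg_right h2α hpos]
  rw [hu t x]
  simp only [← sum_smul, smul_smul]
  rw [sqrt_sum_sq_smul_single_one, abs_mul, abs_of_nonneg (by positivity)]
  calc _ ≤ (r:ℝ) ^ (-(2 * β)) / 2 * ((∑ i ∈ Icc 1 r, g i) * ∑ j ∈ Icc 1 r, g j) := by
        gcongr
        rw [sum_mul_sum]
        refine (abs_sum_le_sum_abs _ _).trans (sum_le_sum fun i _ =>
          (abs_sum_le_sum_abs _ _).trans (sum_le_sum fun j _ => ?_))
        rw [hwave]
        exact abs_mode_le (by linarith) (hkmag_pos i).le (hkmag_pos j).le ht.le _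
    _ ≤ (r:ℝ) ^ (-(2 * β)) / 2 * (8 * 8) := by
        have : 0 ≤ ∑ i ∈ Icc 1 r, g i := sum_nonneg fun i _ => by
          have := hkmag_pos i; positivity
        gcongr
    _ = 32 * (r:ℝ) ^ (-(2 * β)) := by ring
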